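/- arXiv:2111.10899 — 2 statements merged into one kernel-verified Lean document; each statement's English description precedes it below -/
import Mathlib

section
/- Let Φ be an (m+p)×(m+p) matrix of rank m, partitioned into blocks Φ_11 (m×m), Φ_12, Φ_21, Φ_22, with Φ_11 invertible. If [A B] is a full-rank p×(m+p) matrix (A of size p×m, B of size p×p) with [A B]·Φ = 0, then B is invertible. -/
/-! The first block column of `[A B] Φ = 0` gives `A = B C` with `C = -Φ₂₁ Φ₁₁⁻¹`, so
`[A B] = B [C I]` and `p = rank [A B] ≤ rank B`. -/

namespace Matrix

variable {K R : Type*} {l m n : Type*} [Fintype m] [Fintype n]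

theorem isUnit_of_rank_eq_card [Field K] [DecidableEq n] {B : Matrix n n K}
    (h : B.rank = Fintype.card n) : IsUnit B := by
  rw [← mulVec_surjective_iff_isUnit, ← Matrix.coe_mulVecLin, ← LinearMap.range_eq_top]
  exact Submodule.eq_top_of_finrank_eq (by rw [← rank, h, Module.finrank_fintype_fun_eq_card])

theorem isUnit_of_rank_fromCols_mul_left [Field K] [DecidableEq n] (B : Matrix n n K)
    (C : Matrix n m K) (h : (fromCols (B * C) B).rank = Fintype.card n) : IsUnit B := by
  refine isUnit_of_rank_eq_card (le_antisymm (rank_le_card_width B) ?_)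
  calc Fintype.card n = (B * fromCols C 1).rank := by rw [mul_fromCols, mul_one, h]
    _ ≤ B.rank := rank_mul_le_left _ _

theorem eq_mul_of_fromCols_mul_eq_zero [CommRing R] [DecidableEq m] {A : Matrix l m R}
    {B : Matrix l n R} {Φ : Matrix (m ⊕ n) (m ⊕ n) R} (h11 : IsUnit Φ.toBlocks₁₁)
    (hann : fromCols A B * Φ = 0) : A = B * -(Φ.toBlocks₂₁ * Φ.toBlocks₁₁⁻¹) := by
  rw [← fromBlocks_toBlocks Φ, fromCols_mul_fromBlocks, ← fromCols_zero,
    fromCols_ext_iff] at hann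
  have hA : A * Φ.toBlocks₁₁ = -(B * Φ.toBlocks₂₁) := eq_neg_of_add_eq_zero_left hann.1
  calc A = A * Φ.toBlocks₁₁ * Φ.toBlocks₁₁⁻¹ := by
        rw [Matrix.mul_assoc, mul_nonsing_inv _ ((isUnit_iff_isUnit_det _).mp h11), Matrix.mul_one]
    _ = B * -(Φ.toBlocks₂₁ * Φ.toBlocks₁₁⁻¹) := by
        rw [hA, Matrix.mul_neg, Matrix.neg_mul, Matrix.mul_assoc]

end Matrix

theorem stmt_4_general {K : Type*} [Field K] {m p : ℕ}
    (Φ : Matrix (Fin m ⊕ Fin p) (Fin m ⊕ Fin p) K)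
    (h11 : IsUnit (Φ.toBlocks₁₁))
    (A : Matrix (Fin p) (Fin m) K) (B : Matrix (Fin p) (Fin p) K)
    (hfull : (Matrix.fromCols A B).rank = p)
    (hann : Matrix.fromCols A B * Φ = 0) :
    IsUnit B := by
  rw [Matrix.eq_mul_of_fromCols_mul_eq_zero h11 hann] at hfull
  exact Matrix.isUnit_of_rank_fromCols_mul_left B _ (by rw [hfull, Fintype.card_fin])

theorem stmt_4 {K : Type*} [Field K] {m p : ℕ}
    (Φ : Matrix (Fin m ⊕ Fin p) (Fin m ⊕ Fin p) K)
    (hrank : Φ.rank = m)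
    (h11 : IsUnit (Φ.toBlocks₁₁))
    (A : Matrix (Fin p) (Fin m) K) (B : Matrix (Fin p) (Fin p) K)
    (hfull : (Matrix.fromCols A B).rank = p)
    (hann : Matrix.fromCols A B * Φ = 0) :
    IsUnit B :=
  stmt_4_general Φ h11 A B hfull hann
end

section
/- Let W = [W_1; W_2] be a full column rank factorization, where W_1 is an invertible m×m matrix and W_2 is p×m. If two such factorizations W·W* = W'·W'* hold with W' = [W'_1; W'_2] and W'_1 invertible, then W_2·W_1^{-1} = W'_2·(W'_1)^{-1}. (Uniqueness of the deterministic feedback channel H.) -/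
open Matrix

/-!
The top-left and bottom-left blocks of `W Wᴴ` are `W₁ W₁ᴴ` and `W₂ W₁ᴴ`, and since `W₁ᴴ` is
invertible, `W₂ W₁⁻¹ = (W₂ W₁ᴴ) (W₁ W₁ᴴ)⁻¹` is expressed through `W Wᴴ` alone.
-/

namespace Matrix

variable {m n p : Type*} [Fintype n] {R : Type*} [CommRing R] [StarRing R]

theorem mul_inv_eq_mul_conjTranspose_mul_inv [DecidableEq n] {A : Matrix n n R} (hA : IsUnit A)
    (B : Matrix m n R) : B * A⁻¹ = B * Aᴴ * (A * Aᴴ)⁻¹ := by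
  have hAH : IsUnit Aᴴ.det := (isUnit_iff_isUnit_det _).mp ((isUnit_conjTranspose A).mpr hA)
  rw [mul_inv_rev, ← Matrix.mul_assoc, mul_nonsing_inv_cancel_right _ _ hAH]

theorem fromRows_mul_conjTranspose_fromRows (A₁ : Matrix m n R) (A₂ : Matrix p n R) :
    fromRows A₁ A₂ * (fromRows A₁ A₂)ᴴ =
      fromBlocks (A₁ * A₁ᴴ) (A₁ * A₂ᴴ) (A₂ * A₁ᴴ) (A₂ * A₂ᴴ) := by
  rw [conjTranspose_fromRows_eq_fromCols_conjTranspose, fromRows_mul_fromCols]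

end Matrix

theorem stmt_7 {m p : ℕ}
    (W₁ W₁' : Matrix (Fin m) (Fin m) ℂ)
    (W₂ W₂' : Matrix (Fin p) (Fin m) ℂ)
    (h1 : IsUnit W₁) (h1' : IsUnit W₁')
    (heq : Matrix.fromRows W₁ W₂ * (Matrix.fromRows W₁ W₂)ᴴ =
        Matrix.fromRows W₁' W₂' * (Matrix.fromRows W₁' W₂')ᴴ) :
    W₂ * W₁⁻¹ = W₂' * W₁'⁻¹ := by
  rw [fromRows_mul_conjTranspose_fromRows, fromRows_mul_conjTranspose_fromRows] at heq
  obtain ⟨htop, -, hbottom, -⟩ := fromBlocks_inj.mp heq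
  rw [mul_inv_eq_mul_conjTranspose_mul_inv h1, mul_inv_eq_mul_conjTranspose_mul_inv h1',
    htop, hbottom]
end
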